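/- For the Magnus representation β of the free group Fₙ, every element w of the k-th term of the lower central series (Fₙ)_k satisfies β(w) − 1 ∈ Δᵏ. -/

import Mathlib

/-- The relation identifying the squares of the generators with `0`. -/
def MagnusRel (n : ℕ) : FreeAlgebra ℤ (Fin n) → FreeAlgebra ℤ (Fin n) → Prop :=
  fun a b => ∃ j : Fin n, a = FreeAlgebra.ι ℤ j * FreeAlgebra.ι ℤ j ∧ b = 0

/-- The ring `P = ℤ⟨x₁,…,xₙ⟩ / (x₁², …, xₙ²)`.  (Since `xⱼ² = 0`, the Magnus
representation `aⱼ ↦ 1 + xⱼ` takes values in this quotient; it is the image of the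
corresponding power series ring `ℤ⟨⟨x₁,…,xₙ⟩⟩/(xⱼ²)` relevant to the statements below.) -/
abbrev MagnusRing (n : ℕ) := RingQuot (MagnusRel n)

/-- The indeterminate `xⱼ` in `MagnusRing n`. -/
noncomputable def magnusX {n : ℕ} (j : Fin n) : MagnusRing n :=
  RingQuot.mkRingHom (MagnusRel n) (FreeAlgebra.ι ℤ j)

/-- The augmentation `ρ : P → ℤ` sending each `xⱼ` to `0`. -/
noncomputable def magnusAug (n : ℕ) : MagnusRing n →+* ℤ :=
  RingQuot.lift ⟨((FreeAlgebra.lift ℤ (fun _ : Fin n => (0 : ℤ))) : _).toRingHom, by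
    rintro a b ⟨j, rfl, rfl⟩
    simp⟩

/-- The fundamental ideal `Δ = ker ρ`, viewed as a `ℤ`-submodule of `P` (so that its
powers `Δᵏ` are the usual powers of the two-sided ideal `Δ`). -/
noncomputable def magnusDelta (n : ℕ) : Submodule ℤ (MagnusRing n) :=
  (RingHom.ker (magnusAug n)).restrictScalars ℤ

/-!
For a two-sided ideal `I` of a ring, the units `u` with `u - 1 ∈ Iᵐ⁺¹` form a subgroup `Uₘ`, and
`⁅Uₐ, U_b⁆ ≤ U_{a+b+1}` because
`u v u⁻¹ v⁻¹ - 1 = ((u - 1)(v - 1) - (v - 1)(u - 1)) u⁻¹ v⁻¹`.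
Hence the lower central series of any subgroup of `U₀` descends through the `Uₖ`.
The Magnus representation lands in `U₀` for the fundamental ideal `Δ`, since the augmentation
of `β(aⱼ) = 1 + xⱼ` is `1`, so the lower central series of `Fₙ` is mapped into `1 + Δᵏ⁺¹`.
-/

open scoped commutatorElement

namespace Ideal

variable {R : Type*} [Ring R] (I : Ideal R)

theorem top_mul_restrictScalars_pow_le {m : ℕ} (hm : m ≠ 0) :
    ⊤ * I.restrictScalars ℤ ^ m ≤ I.restrictScalars ℤ ^ m := by
  obtain ⟨m, rfl⟩ := Nat.exists_eq_succ_of_ne_zero hm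
  have h : ⊤ * I.restrictScalars ℤ ≤ I.restrictScalars ℤ :=
    Submodule.mul_le.mpr fun r _ x hx => I.mul_mem_left r hx
  rw [pow_succ', ← mul_assoc]
  exact mul_le_mul_left h _

variable [I.IsTwoSided]

theorem restrictScalars_pow_mul_top_le {m : ℕ} (hm : m ≠ 0) :
    I.restrictScalars ℤ ^ m * ⊤ ≤ I.restrictScalars ℤ ^ m := by
  obtain ⟨m, rfl⟩ := Nat.exists_eq_succ_of_ne_zero hm
  have h : I.restrictScalars ℤ * ⊤ ≤ I.restrictScalars ℤ :=
    Submodule.mul_le.mpr fun x hx r _ => I.mul_mem_right r hx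
  rw [pow_succ, mul_assoc]
  exact mul_le_mul_right h _

/-- The units in `1 + Iᵐ⁺¹`; the shift by one matches the indexing of
`Subgroup.lowerCentralSeries`. -/
def unitsOneAddPow (m : ℕ) : Subgroup Rˣ where
  carrier := {u | (u : R) - 1 ∈ I.restrictScalars ℤ ^ (m + 1)}
  one_mem' := by simp
  mul_mem' {u v} hu hv := by
    have hu' : ((u : R) - 1) * v ∈ I.restrictScalars ℤ ^ (m + 1) :=
      I.restrictScalars_pow_mul_top_le m.succ_ne_zero (Submodule.mul_mem_mul hu trivial)
    simpa [sub_mul] using add_mem hu' hv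
  inv_mem' {u} hu := by
    have hu' : ((u⁻¹ : Rˣ) : R) * (u - 1) ∈ I.restrictScalars ℤ ^ (m + 1) :=
      I.top_mul_restrictScalars_pow_le m.succ_ne_zero (Submodule.mul_mem_mul trivial hu)
    simpa [mul_sub] using neg_mem hu'

variable {I} in
theorem mem_unitsOneAddPow {m : ℕ} {u : Rˣ} :
    u ∈ I.unitsOneAddPow m ↔ (u : R) - 1 ∈ I.restrictScalars ℤ ^ (m + 1) :=
  Iff.rfl

variable {I} in
theorem mem_unitsOneAddPow_zero {u : Rˣ} : u ∈ I.unitsOneAddPow 0 ↔ (u : R) - 1 ∈ I := by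
  rw [mem_unitsOneAddPow, zero_add, Submodule.pow_one, Submodule.restrictScalars_mem]

theorem commutator_unitsOneAddPow_le (a b : ℕ) :
    ⁅I.unitsOneAddPow a, I.unitsOneAddPow b⁆ ≤ I.unitsOneAddPow (a + b + 1) := by
  rw [Subgroup.commutator_le]
  intro u hu v hv
  set J := I.restrictScalars ℤ
  have huv : ((u : R) - 1) * (v - 1) ∈ J ^ (a + b + 1 + 1) := by
    rw [show a + b + 1 + 1 = (a + 1) + (b + 1) by ring, pow_add]
    exact Submodule.mul_mem_mul hu hv
  have hvu : ((v : R) - 1) * (u - 1) ∈ J ^ (a + b + 1 + 1) := by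
    rw [show a + b + 1 + 1 = (b + 1) + (a + 1) by ring, pow_add]
    exact Submodule.mul_mem_mul hv hu
  have hcomm : ((⁅u, v⁆ : Rˣ) : R) - 1 =
      (((u : R) - 1) * (v - 1) - (v - 1) * (u - 1)) * ((u⁻¹ : Rˣ) * (v⁻¹ : Rˣ)) := by
    have hdiff : ((u : R) - 1) * (v - 1) - (v - 1) * (u - 1) = u * v - v * u := by noncomm_ring
    rw [hdiff, sub_mul]
    simp [commutatorElement_def, mul_assoc]
  rw [mem_unitsOneAddPow, hcomm]
  exact I.restrictScalars_pow_mul_top_le (by omega)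
    (Submodule.mul_mem_mul (sub_mem huv hvu) trivial)

theorem lowerCentralSeries_le_unitsOneAddPow {S : Subgroup Rˣ} (hS : S ≤ I.unitsOneAddPow 0) :
    ∀ k, S.lowerCentralSeries k ≤ I.unitsOneAddPow k
  | 0 => hS
  | k + 1 => (Subgroup.commutator_mono (lowerCentralSeries_le_unitsOneAddPow hS k) hS).trans
      (I.commutator_unitsOneAddPow_le k 0)

end Ideal

theorem magnusAug_magnusX {n : ℕ} (j : Fin n) : magnusAug n (magnusX j) = 0 := by
  simp [magnusAug, magnusX, RingQuot.lift_mkRingHom_apply]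

theorem magnusAug_apply_eq_one {n : ℕ} {β : FreeGroup (Fin n) →* (MagnusRing n)ˣ}
    (hβ : ∀ j, ((β (FreeGroup.of j) : (MagnusRing n)ˣ) : MagnusRing n) = 1 + magnusX j)
    (w : FreeGroup (Fin n)) : magnusAug n (β w) = 1 := by
  have h : (Units.map (magnusAug n : MagnusRing n →* ℤ)).comp β = 1 :=
    FreeGroup.ext_hom _ _ fun j => Units.ext <| by simp [hβ, magnusAug_magnusX]
  simpa using congrArg Units.val (DFunLike.congr_fun h w)

/-- For the Magnus representation `β`, every element `w` of the `k`-th term of the lower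
central series `(Fₙ)_k` satisfies `β(w) − 1 ∈ Δᵏ`.  (Here `lowerCentralSeries F k` is the
paper's `(Fₙ)_{k+1}`, since the paper indexes the lower central series from `1`.) -/
theorem magnus_lowerCentralSeries_mem {n : ℕ} (β : FreeGroup (Fin n) →* (MagnusRing n)ˣ)
    (hβ : ∀ j : Fin n,
      ((β (FreeGroup.of j) : (MagnusRing n)ˣ) : MagnusRing n) = 1 + magnusX j)
    (k : ℕ) (w : FreeGroup (Fin n)) (hw : w ∈ Subgroup.lowerCentralSeries (⊤ : Subgroup (FreeGroup (Fin n))) k) :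
    ((β w : (MagnusRing n)ˣ) : MagnusRing n) - 1 ∈ magnusDelta n ^ (k + 1) := by
  have hrange : β.range ≤ (RingHom.ker (magnusAug n)).unitsOneAddPow 0 := by
    rintro _ ⟨v, rfl⟩
    rw [Ideal.mem_unitsOneAddPow_zero, RingHom.mem_ker, map_sub, magnusAug_apply_eq_one hβ,
      map_one, sub_self]
  have hmem : β w ∈ β.range.lowerCentralSeries k := by
    rw [MonoidHom.range_eq_map, ← Subgroup.map_lowerCentralSeries]
    exact Subgroup.mem_map_of_mem β hw
  exact Ideal.mem_unitsOneAddPow.mp (Ideal.lowerCentralSeries_le_unitsOneAddPow _ hrange k hmem)
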